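/- Let τ : {a,b}* → {a,b}* be the function with τ(1) = 1 (the empty word), τ(w) = (ab)^{|w|} for every nonempty word w beginning with the letter a, and τ(w) = (ba)^{|w|} for every nonempty word w beginning with the letter b. Then for every language L ⊆ {a,b}* recognized by a finite commutative monoid, the preimage τ⁻¹(L) is recognized by a finite commutative monoid. -/
import Mathlib


/-- The two-letter alphabet `{a, b}`. -/
inductive AB : Type
  | a : AB
  | b : AB
deriving DecidableEq

/-- `wpow x k` is the `k`-fold concatenation `xᵏ` of the word `x`. -/
def wpow {A : Type*} (x : List A) : ℕ → List A
  | 0 => []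
  | n + 1 => x ++ wpow x n

/-- `τ(1) = 1`, `τ(w) = (ab)^{|w|}` if `w` begins with `a`, and
`τ(w) = (ba)^{|w|}` if `w` begins with `b`. -/
def tau : List AB → List AB
  | [] => []
  | AB.a :: rest => wpow [AB.a, AB.b] (rest.length + 1)
  | AB.b :: rest => wpow [AB.b, AB.a] (rest.length + 1)

/-- `L` is recognized by a finite commutative monoid. -/
def RecogByFinCommMonoid {A : Type} (L : Set (List A)) : Prop :=
  ∃ (M : Type) (_ : Fintype M) (_ : CommMonoid M)
    (φ : FreeMonoid A →* M) (S : Set M),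
    L = {w : List A | φ (FreeMonoid.ofList w) ∈ S}

lemma hom_wpow {M : Type} [CommMonoid M] (φ : FreeMonoid AB →* M)
    (x : List AB) : ∀ k, φ (FreeMonoid.ofList (wpow x k)) = (φ (FreeMonoid.ofList x)) ^ k
  | 0 => by simp [wpow]
  | n + 1 => by
    have : FreeMonoid.ofList (wpow x (n+1)) =
        FreeMonoid.ofList x * FreeMonoid.ofList (wpow x n) := rfl
    rw [this, map_mul, hom_wpow φ x n, pow_succ, mul_comm]

/-- `τ` is Com-continuous: preimages of languages recognized by finite
commutative monoids are recognized by finite commutative monoids. -/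
theorem tau_com_continuous (L : Set (List AB)) (hL : RecogByFinCommMonoid L) :
    RecogByFinCommMonoid (tau ⁻¹' L) := by
  obtain ⟨M, hFin, hComm, φ, S, hLS⟩ := hL
  refine ⟨M, hFin, hComm, FreeMonoid.lift (fun _ => φ (FreeMonoid.ofList [AB.a, AB.b])), S, ?_⟩
  ext w
  set m := φ (FreeMonoid.ofList [AB.a, AB.b]) with hm
  have hlift : (FreeMonoid.lift (fun _ : AB => m)) (FreeMonoid.ofList w) = m ^ w.length := by
    induction w with
    | nil => simp
    | cons c rest ih =>
      have : FreeMonoid.ofList (c :: rest) =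
          FreeMonoid.of c * FreeMonoid.ofList rest := rfl
      rw [this, map_mul, ih, FreeMonoid.lift_eval_of, List.length_cons, pow_succ, mul_comm]
  have hba : φ (FreeMonoid.ofList [AB.b, AB.a]) = m := by
    have h1 : FreeMonoid.ofList [AB.a, AB.b] = FreeMonoid.of AB.a * FreeMonoid.of AB.b := rfl
    have h2 : FreeMonoid.ofList [AB.b, AB.a] = FreeMonoid.of AB.b * FreeMonoid.of AB.a := rfl
    rw [hm, h1, h2, map_mul, map_mul, mul_comm]
  have htau : φ (FreeMonoid.ofList (tau w)) = m ^ w.length := by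
    match w with
    | [] => simp [tau]
    | AB.a :: rest => rw [show tau (AB.a :: rest) = wpow [AB.a, AB.b] (rest.length + 1) from rfl,
        hom_wpow, List.length_cons]
    | AB.b :: rest => rw [show tau (AB.b :: rest) = wpow [AB.b, AB.a] (rest.length + 1) from rfl,
        hom_wpow, hba, List.length_cons]
  simp only [Set.mem_preimage, hLS, Set.mem_setOf_eq, hlift, htau]
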